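/- arXiv:2304.12804 — 2 statements merged into one kernel-verified Lean document; each statement's English description precedes it below -/
import Mathlib

section
/- Let K ≥ 2, L ≥ 1 and let X be a balanced K×L matrix with entries in {0,1}, with balanced parameters a and b satisfying a ≠ b and a + (K−1)b ≠ 0. Then X Xᵀ is invertible and Tr((X Xᵀ)⁻¹) = (K/(L(a−b))) · (1 − b/(a+(K−1)b)). -/
open Finset Matrix

/-! Since the entries of `X` are idempotent, the entries of `X Xᵀ` are the values of `ζ_X` on sets
of size one (diagonal) and two (off the diagonal), so `X Xᵀ = L (a - b) I + L b J` with `J` the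
all-ones matrix. As `J² = K J`, the inverse of `c I + d J` is again of this shape, namely
`c⁻¹ (I - d / (c + K d) J)`, and its trace is read off directly. -/

namespace Matrix

section AllOnes

variable {n : Type*} [Fintype n]

theorem of_one_mul_of_one {α : Type*} [NonAssocSemiring α] :
    (of 1 : Matrix n n α) * of 1 = (Fintype.card n : α) • of 1 := by
  ext
  simp [mul_apply]

theorem trace_of_one {α : Type*} [AddCommMonoidWithOne α] :
    trace (of 1 : Matrix n n α) = Fintype.card n := by
  simp [trace]

variable {𝕜 : Type*} [Field 𝕜]

theorem smul_one_add_smul_of_one_mul_eq_one [DecidableEq n] {c d : 𝕜} (hc : c ≠ 0)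
    (hcd : c + Fintype.card n * d ≠ 0) :
    (c • 1 + d • of 1 : Matrix n n 𝕜) * (c⁻¹ • (1 - (d / (c + Fintype.card n * d)) • of 1))
      = 1 := by
  simp only [smul_sub, add_mul, mul_sub, smul_mul_smul, Matrix.one_mul, Matrix.mul_one,
    of_one_mul_of_one, smul_smul]
  match_scalars
  · rw [mul_one, mul_inv_cancel₀ hc]
  · linear_combination (-c⁻¹) * div_mul_cancel₀ d hcd

theorem inv_smul_one_add_smul_of_one [DecidableEq n] {c d : 𝕜} (hc : c ≠ 0)
    (hcd : c + Fintype.card n * d ≠ 0) :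
    (c • 1 + d • of 1 : Matrix n n 𝕜)⁻¹ = c⁻¹ • (1 - (d / (c + Fintype.card n * d)) • of 1) :=
  inv_eq_right_inv (smul_one_add_smul_of_one_mul_eq_one hc hcd)

theorem isUnit_smul_one_add_smul_of_one [DecidableEq n] {c d : 𝕜} (hc : c ≠ 0)
    (hcd : c + Fintype.card n * d ≠ 0) : IsUnit (c • 1 + d • of 1 : Matrix n n 𝕜) :=
  (isUnit_iff_isUnit_det _).mpr
    (isUnit_det_of_right_inverse (smul_one_add_smul_of_one_mul_eq_one hc hcd))

theorem trace_inv_smul_one_add_smul_of_one [DecidableEq n] {c d : 𝕜} (hc : c ≠ 0)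
    (hcd : c + Fintype.card n * d ≠ 0) :
    trace (c • 1 + d • of 1 : Matrix n n 𝕜)⁻¹
      = Fintype.card n / c * (1 - d / (c + Fintype.card n * d)) := by
  rw [inv_smul_one_add_smul_of_one hc hcd, trace_smul, trace_sub, trace_smul, trace_one,
    trace_of_one, smul_eq_mul, smul_eq_mul]
  ring

end AllOnes

section Gram

variable {m n R : Type*} [Fintype n] [CommRing R]

theorem mul_transpose_apply_eq_sum_prod_pair [DecidableEq m] {X : Matrix m n R}
    (hX : ∀ k l, IsIdempotentElem (X k l)) (i j : m) :
    (X * Xᵀ) i j = ∑ l, ∏ k ∈ {i, j}, X k l := by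
  rw [mul_apply]
  refine sum_congr rfl fun l _ => ?_
  obtain rfl | hij := eq_or_ne i j
  · rw [insert_eq_of_mem (mem_singleton_self i), prod_singleton, transpose_apply, hX i l]
  · rw [prod_pair hij, transpose_apply]

theorem mul_transpose_eq_smul_one_add_smul_of_one [DecidableEq m] {X : Matrix m n R}
    (hX : ∀ k l, IsIdempotentElem (X k l)) {α β : R}
    (hα : ∀ Θ : Finset m, #Θ = 1 → ∑ l, ∏ k ∈ Θ, X k l = α)
    (hβ : ∀ Θ : Finset m, #Θ = 2 → ∑ l, ∏ k ∈ Θ, X k l = β) :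
    X * Xᵀ = (α - β) • 1 + β • of 1 := by
  ext i j
  rw [mul_transpose_apply_eq_sum_prod_pair hX]
  obtain rfl | hij := eq_or_ne i j
  · simpa using hα {i} (card_singleton i)
  · simp [hβ {i, j} (card_pair hij), one_apply_ne hij]

end Gram

end Matrix

theorem stmt6_general (K L : ℕ) (hL : 1 ≤ L)
    (X : Matrix (Fin K) (Fin L) ℝ)
    (h01 : ∀ k l, X k l = 0 ∨ X k l = 1)
    (a b : ℝ)
    (ha : ∀ Θ : Finset (Fin K), Θ.card = 1 →
      ∑ l : Fin L, ∏ k ∈ Θ, X k l = (L : ℝ) * a)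
    (hb : ∀ Θ : Finset (Fin K), Θ.card = 2 →
      ∑ l : Fin L, ∏ k ∈ Θ, X k l = (L : ℝ) * b)
    (hab : a ≠ b) (habK : a + ((K : ℝ) - 1) * b ≠ 0) :
    IsUnit (X * Xᵀ)
    ∧ Matrix.trace (X * Xᵀ)⁻¹
        = ((K : ℝ) / ((L : ℝ) * (a - b)))
            * (1 - b / (a + ((K : ℝ) - 1) * b)) := by
  have hX : ∀ k l, IsIdempotentElem (X k l) := fun k l => by
    rcases h01 k l with h | h <;> rw [h]
    exacts [.zero, .one]
  have hL0 : (L : ℝ) ≠ 0 := Nat.cast_ne_zero.mpr (by omega)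
  have hc : (L : ℝ) * (a - b) ≠ 0 := mul_ne_zero hL0 (sub_ne_zero.mpr hab)
  have hcd_eq : (L : ℝ) * (a - b) + Fintype.card (Fin K) * (L * b) = L * (a + (K - 1) * b) := by
    rw [Fintype.card_fin]
    ring
  have hcd : (L : ℝ) * (a - b) + Fintype.card (Fin K) * (L * b) ≠ 0 := by
    rw [hcd_eq]
    exact mul_ne_zero hL0 habK
  rw [mul_transpose_eq_smul_one_add_smul_of_one hX ha hb, ← mul_sub]
  refine ⟨isUnit_smul_one_add_smul_of_one hc hcd, ?_⟩
  rw [trace_inv_smul_one_add_smul_of_one hc hcd, hcd_eq, mul_div_mul_left _ _ hL0,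
    Fintype.card_fin]

/-- For a balanced `K × L` `{0,1}` matrix `X` (`K ≥ 2`, `L ≥ 1`)
with balanced parameters `a, b` satisfying `a ≠ b` and `a + (K−1)b ≠ 0`,
the matrix `X Xᵀ` is invertible and
`Tr((X Xᵀ)⁻¹) = (K/(L(a−b))) (1 − b/(a+(K−1)b))`. -/
theorem stmt6 (K L : ℕ) (hK : 2 ≤ K) (hL : 1 ≤ L)
    (X : Matrix (Fin K) (Fin L) ℝ)
    (h01 : ∀ k l, X k l = 0 ∨ X k l = 1)
    (hbal : ∀ Θ₁ Θ₂ : Finset (Fin K), Θ₁.Nonempty → Θ₂.Nonempty →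
      Θ₁.card = Θ₂.card →
      ∑ l : Fin L, ∏ k ∈ Θ₁, X k l = ∑ l : Fin L, ∏ k ∈ Θ₂, X k l)
    (a b : ℝ)
    (ha : ∀ Θ : Finset (Fin K), Θ.card = 1 →
      ∑ l : Fin L, ∏ k ∈ Θ, X k l = (L : ℝ) * a)
    (hb : ∀ Θ : Finset (Fin K), Θ.card = 2 →
      ∑ l : Fin L, ∏ k ∈ Θ, X k l = (L : ℝ) * b)
    (hab : a ≠ b) (habK : a + ((K : ℝ) - 1) * b ≠ 0) :
    IsUnit (X * Xᵀ)
    ∧ Matrix.trace (X * Xᵀ)⁻¹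
        = ((K : ℝ) / ((L : ℝ) * (a - b)))
            * (1 - b / (a + ((K : ℝ) - 1) * b)) :=
  stmt6_general K L hL X h01 a b ha hb hab habK
end

section
/- Let K ≥ 3 and let X be a balanced K×L matrix with entries in {0,1}, with balanced parameters a, b, c. Then for every real number ψ and every vector λ ∈ ℝ^K, Σ_{l=1}^{L} ( x_lᵀ (I_K + ψ E_K) x_l ) · ( x_lᵀ λ ) = L[ (a + (K−1)b) + ψ (a + 3(K−1)b + (K−1)(K−2)c) ] · Σ_{k=1}^{K} λ_k. -/
open Finset

/-- value of the triple sum depending on coincidence pattern -/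
def Gfun (K : ℕ) (a b c : ℝ) (k i j : Fin K) : ℝ :=
  if i = k ∧ j = k then a else if i = j ∨ i = k ∨ j = k then b else c

lemma sumIfOne (K : ℕ) (k : Fin K) (u v : ℝ) :
    ∑ i : Fin K, (if i = k then u else v) = u + ((K : ℝ) - 1) * v := by
  have h : ∀ i : Fin K, (if i = k then u else v)
      = v + (if i = k then u - v else 0) := by
    intro i; split <;> ring
  rw [Finset.sum_congr rfl fun i _ => h i, Finset.sum_add_distrib,
    Finset.sum_const, Finset.sum_ite_eq']
  simp [Finset.card_univ]
  ring

lemma sumIfTwo (K : ℕ) (k i : Fin K) (hik : i ≠ k) (u v w : ℝ) :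
    ∑ j : Fin K, (if j = k then u else if j = i then v else w)
      = u + v + ((K : ℝ) - 2) * w := by
  have h : ∀ j : Fin K, (if j = k then u else if j = i then v else w)
      = w + ((if j = k then u - w else 0) + (if j = i then v - w else 0)) := by
    intro j
    by_cases h1 : j = k
    · subst h1
      rw [if_pos rfl, if_pos rfl, if_neg (fun h => hik h.symm)]
      ring
    · by_cases h2 : j = i
      · rw [if_neg h1, if_pos h2, if_neg h1, if_pos h2]; ring
      · rw [if_neg h1, if_neg h2, if_neg h1, if_neg h2]; ring
  rw [Finset.sum_congr rfl fun j _ => h j, Finset.sum_add_distrib,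
    Finset.sum_const, Finset.sum_add_distrib, Finset.sum_ite_eq',
    Finset.sum_ite_eq']
  simp [Finset.card_univ]
  ring

lemma GDiag (K : ℕ) (a b c : ℝ) (k i : Fin K) :
    Gfun K a b c k i i = if i = k then a else b := by
  unfold Gfun
  by_cases h : i = k <;> simp [h]

lemma S1lem (K : ℕ) (k : Fin K) (a b c : ℝ) :
    ∑ i : Fin K, ∑ j : Fin K,
        (if i = j then (1 : ℝ) else 0) * Gfun K a b c k i j
      = a + ((K : ℝ) - 1) * b := by
  have hin : ∀ i : Fin K, ∑ j : Fin K,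
      (if i = j then (1 : ℝ) else 0) * Gfun K a b c k i j
      = Gfun K a b c k i i := by
    intro i
    have h : ∀ j : Fin K, (if i = j then (1 : ℝ) else 0) * Gfun K a b c k i j
        = if i = j then Gfun K a b c k i j else 0 := by
      intro j; split <;> simp
    rw [Finset.sum_congr rfl fun j _ => h j, Finset.sum_ite_eq]
    simp
  rw [Finset.sum_congr rfl fun i _ => hin i,
    Finset.sum_congr rfl fun i _ => GDiag K a b c k i, sumIfOne]

lemma S2lem (K : ℕ) (k : Fin K) (a b c : ℝ) :
    ∑ i : Fin K, ∑ j : Fin K, Gfun K a b c k i j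
      = a + 3 * ((K : ℝ) - 1) * b + ((K : ℝ) - 1) * ((K : ℝ) - 2) * c := by
  have hrow : ∀ i : Fin K, ∑ j : Fin K, Gfun K a b c k i j
      = if i = k then a + ((K : ℝ) - 1) * b else 2 * b + ((K : ℝ) - 2) * c := by
    intro i
    by_cases hik : i = k
    · subst hik
      have h : ∀ j : Fin K, Gfun K a b c i i j = if j = i then a else b := by
        intro j; unfold Gfun
        by_cases hj : j = i <;> simp [hj]
      rw [Finset.sum_congr rfl fun j _ => h j, sumIfOne, if_pos rfl]
    · have h : ∀ j : Fin K, Gfun K a b c k i j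
          = if j = k then b else if j = i then b else c := by
        intro j; unfold Gfun
        by_cases h1 : j = k
        · subst h1
          simp [hik]
        · by_cases h2 : j = i
          · subst h2
            simp [hik, h1]
          · simp only [hik, h1, h2, if_false, or_false, false_and,
              if_neg (fun h : i = j => h2 h.symm)]
      rw [Finset.sum_congr rfl fun j _ => h j, sumIfTwo K k i hik, if_neg hik]
      ring
  rw [Finset.sum_congr rfl fun i _ => hrow i, sumIfOne]
  ring

theorem stmt8 (K L : ℕ) (hK : 3 ≤ K) (X : Matrix (Fin K) (Fin L) ℝ)
    (h01 : ∀ k l, X k l = 0 ∨ X k l = 1)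
    (hbal : ∀ Θ₁ Θ₂ : Finset (Fin K), Θ₁.Nonempty → Θ₂.Nonempty →
      Θ₁.card = Θ₂.card →
      ∑ l : Fin L, ∏ k ∈ Θ₁, X k l = ∑ l : Fin L, ∏ k ∈ Θ₂, X k l)
    (a b c : ℝ)
    (ha : ∀ Θ : Finset (Fin K), Θ.card = 1 →
      ∑ l : Fin L, ∏ k ∈ Θ, X k l = (L : ℝ) * a)
    (hb : ∀ Θ : Finset (Fin K), Θ.card = 2 →
      ∑ l : Fin L, ∏ k ∈ Θ, X k l = (L : ℝ) * b)
    (hc : ∀ Θ : Finset (Fin K), Θ.card = 3 →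
      ∑ l : Fin L, ∏ k ∈ Θ, X k l = (L : ℝ) * c)
    (ψ : ℝ) (lam : Fin K → ℝ) :
    ∑ l : Fin L,
        (∑ i : Fin K, ∑ j : Fin K,
            X i l * ((if i = j then (1 : ℝ) else 0) + ψ) * X j l)
          * (∑ k : Fin K, X k l * lam k)
      = (L : ℝ) * ((a + ((K : ℝ) - 1) * b)
            + ψ * (a + 3 * ((K : ℝ) - 1) * b
              + ((K : ℝ) - 1) * ((K : ℝ) - 2) * c))
          * ∑ k : Fin K, lam k := by
  -- squares of 0/1 entries
  have hsq : ∀ (i : Fin K) (l : Fin L), X i l * X i l = X i l := by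
    intro i l; rcases h01 i l with h | h <;> rw [h] <;> ring
  -- single sums
  have hsingle : ∀ i : Fin K, ∑ l : Fin L, X i l = (L : ℝ) * a := by
    intro i
    have := ha {i} (Finset.card_singleton i)
    simpa using this
  -- pair sums
  have hpair : ∀ i j : Fin K, i ≠ j → ∑ l : Fin L, X i l * X j l = (L : ℝ) * b := by
    intro i j hij
    have hcard : ({i, j} : Finset (Fin K)).card = 2 := by
      rw [Finset.card_insert_of_notMem (by simpa using hij), Finset.card_singleton]
    have := hb {i, j} hcard
    simpa [Finset.prod_pair hij] using this
  -- triple sums (distinct)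
  have htriple : ∀ k i j : Fin K, k ≠ i → k ≠ j → i ≠ j →
      ∑ l : Fin L, X k l * (X i l * X j l) = (L : ℝ) * c := by
    intro k i j hki hkj hij
    have hcard : ({k, i, j} : Finset (Fin K)).card = 3 := by
      rw [Finset.card_insert_of_notMem (by simp [hki, hkj]),
        Finset.card_insert_of_notMem (by simpa using hij), Finset.card_singleton]
    have := hc {k, i, j} hcard
    have hprod : ∀ l : Fin L, ∏ m ∈ ({k, i, j} : Finset (Fin K)), X m l
        = X k l * (X i l * X j l) := by
      intro l
      rw [Finset.prod_insert (by simp [hki, hkj]), Finset.prod_pair hij]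
    rw [Finset.sum_congr rfl fun l _ => hprod l] at this
    exact this
  -- the key triple sum formula
  have trip : ∀ k i j : Fin K,
      ∑ l : Fin L, X k l * (X i l * X j l) = (L : ℝ) * Gfun K a b c k i j := by
    intro k i j
    unfold Gfun
    by_cases hik : i = k
    · subst hik
      by_cases hjk : j = i
      · subst hjk
        rw [if_pos ⟨rfl, rfl⟩]
        have h : ∀ l : Fin L, X j l * (X j l * X j l) = X j l := by
          intro l; rw [hsq, hsq]
        rw [Finset.sum_congr rfl fun l _ => h l]
        exact hsingle j
      · rw [if_neg (fun h => hjk h.2), if_pos (Or.inr (Or.inl rfl))]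
        have h : ∀ l : Fin L, X i l * (X i l * X j l) = X i l * X j l := by
          intro l; rw [← mul_assoc, hsq]
        rw [Finset.sum_congr rfl fun l _ => h l]
        exact hpair i j (fun h => hjk h.symm)
    · by_cases hjk : j = k
      · subst hjk
        rw [if_neg (fun h => hik h.1), if_pos (Or.inr (Or.inr rfl))]
        have h : ∀ l : Fin L, X j l * (X i l * X j l) = X j l * X i l := by
          intro l
          have : X j l * (X i l * X j l) = (X j l * X j l) * X i l := by ring
          rw [this, hsq]
        rw [Finset.sum_congr rfl fun l _ => h l]
        exact hpair j i (fun h => hik h.symm)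
      · by_cases hij : i = j
        · subst hij
          rw [if_neg (fun h => hik h.1), if_pos (Or.inl rfl)]
          have h : ∀ l : Fin L, X k l * (X i l * X i l) = X k l * X i l := by
            intro l; rw [hsq]
          rw [Finset.sum_congr rfl fun l _ => h l]
          exact hpair k i (fun h => hik h.symm)
        · rw [if_neg (fun h => hik h.1), if_neg (by push_neg; exact ⟨hij, hik, hjk⟩)]
          exact htriple k i j (fun h => hik h.symm) (fun h => hjk h.symm) hij
  -- rearrange the big sum
  calc ∑ l : Fin L,
        (∑ i : Fin K, ∑ j : Fin K,
            X i l * ((if i = j then (1 : ℝ) else 0) + ψ) * X j l)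
          * (∑ k : Fin K, X k l * lam k)
      = ∑ l : Fin L, ∑ k : Fin K, ∑ i : Fin K, ∑ j : Fin K,
          (X i l * ((if i = j then (1 : ℝ) else 0) + ψ) * X j l) * (X k l * lam k) := by
        refine Finset.sum_congr rfl fun l _ => ?_
        rw [Finset.mul_sum]
        refine Finset.sum_congr rfl fun k _ => ?_
        rw [Finset.sum_mul]
        refine Finset.sum_congr rfl fun i _ => ?_
        rw [Finset.sum_mul]
    _ = ∑ k : Fin K, ∑ i : Fin K, ∑ j : Fin K, ∑ l : Fin L,
          (X i l * ((if i = j then (1 : ℝ) else 0) + ψ) * X j l) * (X k l * lam k) := by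
        rw [Finset.sum_comm]
        refine Finset.sum_congr rfl fun k _ => ?_
        rw [Finset.sum_comm]
        refine Finset.sum_congr rfl fun i _ => ?_
        exact Finset.sum_comm
    _ = ∑ k : Fin K, ∑ i : Fin K, ∑ j : Fin K,
          lam k * (((if i = j then (1 : ℝ) else 0) + ψ)
            * ∑ l : Fin L, X k l * (X i l * X j l)) := by
        refine Finset.sum_congr rfl fun k _ => Finset.sum_congr rfl fun i _ =>
          Finset.sum_congr rfl fun j _ => ?_
        rw [Finset.mul_sum, Finset.mul_sum]
        refine Finset.sum_congr rfl fun l _ => ?_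
        ring
    _ = ∑ k : Fin K, lam k * (∑ i : Fin K, ∑ j : Fin K,
          ((if i = j then (1 : ℝ) else 0) + ψ) * ((L : ℝ) * Gfun K a b c k i j)) := by
        refine Finset.sum_congr rfl fun k _ => ?_
        rw [Finset.mul_sum]
        refine Finset.sum_congr rfl fun i _ => ?_
        rw [Finset.mul_sum]
        refine Finset.sum_congr rfl fun j _ => ?_
        rw [trip k i j]
    _ = ∑ k : Fin K, lam k * ((L : ℝ) * ((a + ((K : ℝ) - 1) * b)
            + ψ * (a + 3 * ((K : ℝ) - 1) * b
              + ((K : ℝ) - 1) * ((K : ℝ) - 2) * c))) := by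
        refine Finset.sum_congr rfl fun k _ => ?_
        congr 1
        have e : ∀ i j : Fin K,
            ((if i = j then (1 : ℝ) else 0) + ψ) * ((L : ℝ) * Gfun K a b c k i j)
            = (L : ℝ) * ((if i = j then (1 : ℝ) else 0) * Gfun K a b c k i j)
              + ((L : ℝ) * ψ) * Gfun K a b c k i j := fun i j => by ring
        rw [Finset.sum_congr rfl fun i (_ : i ∈ Finset.univ) =>
          Finset.sum_congr rfl fun j (_ : j ∈ Finset.univ) => e i j]
        have split : ∑ i : Fin K, ∑ j : Fin K,
            ((L : ℝ) * ((if i = j then (1 : ℝ) else 0) * Gfun K a b c k i j)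
              + ((L : ℝ) * ψ) * Gfun K a b c k i j)
            = (L : ℝ) * (∑ i : Fin K, ∑ j : Fin K,
                (if i = j then (1 : ℝ) else 0) * Gfun K a b c k i j)
              + ((L : ℝ) * ψ) * (∑ i : Fin K, ∑ j : Fin K, Gfun K a b c k i j) := by
          simp only [Finset.sum_add_distrib, Finset.mul_sum]
        rw [split, S1lem, S2lem]
        ring
    _ = (L : ℝ) * ((a + ((K : ℝ) - 1) * b)
            + ψ * (a + 3 * ((K : ℝ) - 1) * b
              + ((K : ℝ) - 1) * ((K : ℝ) - 2) * c))
          * ∑ k : Fin K, lam k := by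
        rw [Finset.mul_sum]
        refine Finset.sum_congr rfl fun k _ => ?_
        ring
end
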